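/- Let u be a uniformly recurrent infinite word with no weak bispecial factor. Then u satisfies property R_m if and only if C(n) = (m−1)n + 1 for all n ≥ 0. -/

import Mathlib

variable {A : Type*}

/-- The factor of `u` of length `n` starting at position `j`. -/
def factorAt (u : ℕ → A) (j n : ℕ) : List A :=
  (List.range n).map (fun i => u (j + i))

/-- `j` is an occurrence of the finite word `w` in `u`. -/
def OccursAt (u : ℕ → A) (w : List A) (j : ℕ) : Prop :=
  factorAt u j w.length = w

/-- `w` is a factor of the infinite word `u`. -/
def IsFactor (u : ℕ → A) (w : List A) : Prop :=
  ∃ j, OccursAt u w j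

/-- `v` is a return word of `w` in `u`: the word between two successive occurrences of `w`. -/
def IsReturnWord (u : ℕ → A) (w v : List A) : Prop :=
  ∃ j k, j < k ∧ OccursAt u w j ∧ OccursAt u w k ∧
    (∀ l, j < l → l < k → ¬ OccursAt u w l) ∧ v = factorAt u j (k - j)

/-- The set `R(w)` of return words of `w` in `u`. -/
def returnWords (u : ℕ → A) (w : List A) : Set (List A) :=
  {v | IsReturnWord u w v}

/-- Property `R_m`: every factor of `u` has exactly `m` return words. -/
def PropertyR (u : ℕ → A) (m : ℕ) : Prop :=
  ∀ w, IsFactor u w → (returnWords u w).Finite ∧ (returnWords u w).ncard = m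

/-- The set of left extensions of `w`. -/
def leftExt (u : ℕ → A) (w : List A) : Set A := {a | IsFactor u (a :: w)}

/-- The set of right extensions of `w`. -/
def rightExt (u : ℕ → A) (w : List A) : Set A := {b | IsFactor u (w ++ [b])}

def LeftSpecial (u : ℕ → A) (w : List A) : Prop := 2 ≤ (leftExt u w).ncard

def RightSpecial (u : ℕ → A) (w : List A) : Prop := 2 ≤ (rightExt u w).ncard

/-- The set of pairs `(a, b)` such that `a w b` is a factor of `u`. -/
def extPairs (u : ℕ → A) (w : List A) : Set (A × A) :=
  {p | IsFactor u (p.1 :: (w ++ [p.2]))}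

/-- The bilateral order `B(w)`. -/
noncomputable def bilateralOrder (u : ℕ → A) (w : List A) : ℤ :=
  ((extPairs u w).ncard : ℤ) - (leftExt u w).ncard - (rightExt u w).ncard + 1

/-- `w` is a weak bispecial factor of `u`. -/
def WeakBispecial (u : ℕ → A) (w : List A) : Prop :=
  IsFactor u w ∧ bilateralOrder u w < 0

/-- The factor complexity of `u`. -/
noncomputable def Complexity (u : ℕ → A) (n : ℕ) : ℕ :=
  {w : List A | w.length = n ∧ IsFactor u w}.ncard

/-- `u` is recurrent: every factor occurs at least twice. -/
def Recurrent (u : ℕ → A) : Prop :=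
  ∀ w, IsFactor u w → ∃ j k, j < k ∧ OccursAt u w j ∧ OccursAt u w k

/-- `u` is uniformly recurrent. -/
def UniformlyRecurrent (u : ℕ → A) : Prop :=
  ∀ n : ℕ, ∃ N : ℕ, ∀ w, IsFactor u w → w.length = N →
    ∀ v, IsFactor u v → v.length = n → v <:+: w

def EventuallyPeriodic (u : ℕ → A) : Prop :=
  ∃ p, 0 < p ∧ ∃ N, ∀ n, N ≤ n → u (n + p) = u n

/-- `w` is a maximal right special factor. -/
def MaximalRightSpecial (u : ℕ → A) (w : List A) : Prop :=
  IsFactor u w ∧ RightSpecial u w ∧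
    ∀ v, IsFactor u v → RightSpecial u v → w <:+ v → v = w

/-- The return word `v` of `w` starts with the letter `b`. -/
def StartsWithLetter (w v : List A) (b : A) : Prop := (w ++ [b]) <+: (v ++ w)

/-!
Write `μ w = #E_r(w) - 1` (`rightBranching`). Since `a w b` is a factor exactly when `b` is a
right extension of `a w`, `B(w) = ∑_{a ∈ E_ℓ(w)} μ (a w) - μ w`: without weak bispecial factors
`μ` can only grow along left extensions, and it is additive when every `B(w)` vanishes.
Iterating, `μ v ≤ ∑_{p ∈ S} μ p` for every finite suffix-free set `S` of left extensions of `v`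
through which every long enough left extension of `v` passes.

For a factor `w`, the factors in which `w` occurs only as a prefix form such a set for `v = ε`
(uniform recurrence bounds their length), and those ending with `v` form one for each `v` of
length `|w|`. Each one-letter right extension of such a factor is either again such a factor or
a complete return word `r w` with `r ∈ R(w)`, whence `#R(w) = 1 + ∑_p μ p`. As
`∑_{|v| = n} μ v = C(n+1) - C(n)`, property `R_m` bounds these differences by `m - 1` from above,
and their monotonicity together with `#R(ε) = C(1)` from below. Conversely, affine complexity
gives `∑_{|w| = n} B(w) = 0`, so every `B(w)` vanishes, the inequality becomes an equality, and
`#R(w) = 1 + μ ε = C(1) = m`.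
-/

open Finset
open scoped Classical

section Words

variable {u : ℕ → A}

@[simp] lemma factorAt_length (u : ℕ → A) (j n : ℕ) : (factorAt u j n).length = n := by
  simp [factorAt]

lemma factorAt_add (u : ℕ → A) (j a b : ℕ) :
    factorAt u j (a + b) = factorAt u j a ++ factorAt u (j + a) b := by
  simp [factorAt, List.range_add, Nat.add_assoc]

lemma factorAt_take (u : ℕ → A) (j : ℕ) {n k : ℕ} (h : k ≤ n) :
    (factorAt u j n).take k = factorAt u j k := by
  obtain ⟨c, rfl⟩ := Nat.exists_eq_add_of_le h
  rw [factorAt_add, List.take_left' (factorAt_length ..)]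

lemma factorAt_drop (u : ℕ → A) (j : ℕ) {n k : ℕ} (h : k ≤ n) :
    (factorAt u j n).drop k = factorAt u (j + k) (n - k) := by
  obtain ⟨c, rfl⟩ := Nat.exists_eq_add_of_le h
  rw [factorAt_add, List.drop_left' (factorAt_length ..), Nat.add_sub_cancel_left]

lemma OccursAt.eq_factorAt {w : List A} {j : ℕ} (h : OccursAt u w j) :
    w = factorAt u j w.length :=
  h.symm

lemma isFactor_factorAt (u : ℕ → A) (j n : ℕ) : IsFactor u (factorAt u j n) :=
  ⟨j, by rw [OccursAt, factorAt_length]⟩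

lemma isFactor_nil : IsFactor u [] :=
  ⟨0, rfl⟩

lemma OccursAt.infix {x y : List A} {j : ℕ} (hx : OccursAt u x j) (h : y <:+: x) :
    ∃ i, i + y.length ≤ x.length ∧ OccursAt u y (j + i) := by
  obtain ⟨s, t, rfl⟩ := h
  refine ⟨s.length, by simp, ?_⟩
  have := congrArg (fun l => (l.drop s.length).take y.length) hx.eq_factorAt
  simp only [List.append_assoc, List.drop_left, List.take_left] at this
  rw [this, factorAt_drop _ _ (by simp), factorAt_take _ _ (by simp)]
  simp [OccursAt]

lemma IsFactor.of_infix {x y : List A} (hx : IsFactor u x) (h : y <:+: x) : IsFactor u y :=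
  have ⟨_, hj⟩ := hx
  have ⟨_, _, hy⟩ := hj.infix h
  ⟨_, hy⟩

lemma IsFactor.of_prefix {x y : List A} (hx : IsFactor u x) (h : y <+: x) : IsFactor u y :=
  hx.of_infix h.isInfix

lemma IsFactor.of_suffix {x y : List A} (hx : IsFactor u x) (h : y <:+ x) : IsFactor u y :=
  hx.of_infix h.isInfix

def OccursInEveryWindow (u : ℕ → A) (w : List A) (N : ℕ) : Prop :=
  ∀ q, ∃ i, i + w.length ≤ N ∧ OccursAt u w (q + i)

lemma occursInEveryWindow_nil : OccursInEveryWindow u [] 0 :=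
  fun _ => ⟨0, le_rfl, rfl⟩

lemma UniformlyRecurrent.exists_occursInEveryWindow (hur : UniformlyRecurrent u) {w : List A}
    (hw : IsFactor u w) : ∃ N, OccursInEveryWindow u w N := by
  obtain ⟨N, hN⟩ := hur w.length
  refine ⟨N, fun q => ?_⟩
  have hinfix := hN _ (isFactor_factorAt u q N) (factorAt_length ..) w hw rfl
  simpa using (show OccursAt u (factorAt u q N) q by simp [OccursAt]).infix hinfix

end Words

section Occurrences

variable {w p x : List A}

/-- The bound on `i` only matters for `w = []`, which would otherwise occur at every `i`. -/
def OccursIn (w p : List A) (i : ℕ) : Prop :=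
  i + w.length ≤ p.length ∧ w <+: p.drop i

lemma occursIn_zero : OccursIn w p 0 ↔ w <+: p := by
  simp only [OccursIn, Nat.zero_add, List.drop_zero, and_iff_right_iff_imp]
  exact List.IsPrefix.length_le

lemma occursIn_cons_succ {a : A} {i : ℕ} : OccursIn w (a :: p) (i + 1) ↔ OccursIn w p i := by
  simp only [OccursIn, List.length_cons, List.drop_succ_cons, Nat.add_right_comm i 1,
    Nat.add_le_add_iff_right]

lemma OccursIn.append {i : ℕ} (h : OccursIn w p i) (x : List A) : OccursIn w (p ++ x) i := by
  obtain ⟨hi, hpre⟩ := h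
  refine ⟨by rw [List.length_append]; omega, ?_⟩
  rw [List.drop_append_of_le_length (by omega)]
  exact hpre.trans (List.prefix_append _ _)

lemma OccursIn.of_append {i : ℕ} (h : OccursIn w (p ++ x) i) (hi : i + w.length ≤ p.length) :
    OccursIn w p i := by
  refine ⟨hi, ?_⟩
  have := h.2
  rw [List.drop_append_of_le_length (by omega)] at this
  exact List.prefix_of_prefix_length_le this (List.prefix_append _ _)
    (by rw [List.length_drop]; omega)

lemma occursIn_iff_suffix (h : w.length ≤ x.length) :
    OccursIn w x (x.length - w.length) ↔ w <:+ x := by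
  rw [List.suffix_iff_eq_drop, OccursIn, Nat.sub_add_cancel h]
  simp only [le_refl, true_and]
  exact ⟨fun hw => hw.eq_of_length (by rw [List.length_drop]; omega),
    fun hw => hw ▸ List.prefix_refl _⟩

def HasUniqueOccurrence (w p : List A) : Prop :=
  w <+: p ∧ ∀ i, 0 < i → ¬ OccursIn w p i

def IsCompleteReturn (w c : List A) : Prop :=
  w <+: c ∧ w <:+ c ∧ w.length < c.length ∧
    ∀ i, 0 < i → i + w.length < c.length → ¬ OccursIn w c i

end Occurrences

section UniqueOccurrence

variable {w p q x : List A}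

lemma hasUniqueOccurrence_self (w : List A) : HasUniqueOccurrence w w :=
  ⟨List.prefix_refl w, fun i hi hocc => by have := hocc.1; omega⟩

lemma HasUniqueOccurrence.eq_of_suffix (hp : HasUniqueOccurrence w p)
    (hq : HasUniqueOccurrence w q) (h : p <:+ q) : p = q := by
  refine h.eq_of_length (le_antisymm h.length_le (not_lt.1 fun hlt => ?_))
  refine hq.2 (q.length - p.length) (by omega) ⟨?_, ?_⟩
  · have := hp.1.length_le
    omega
  · rw [← List.suffix_iff_eq_drop.1 h]
    exact hp.1

lemma exists_suffix_hasUniqueOccurrence {i : ℕ} (h : OccursIn w x i) :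
    ∃ p, p <:+ x ∧ HasUniqueOccurrence w p := by
  induction x generalizing i with
  | nil =>
    have hlen := h.1
    rw [List.length_nil] at hlen
    obtain rfl : w = [] := List.eq_nil_of_length_eq_zero (by omega)
    exact ⟨[], List.suffix_refl _, List.nil_prefix, fun j hj hocc => by
      have := hocc.1; simp only [List.length_nil] at this; omega⟩
  | cons a x ih =>
    by_cases hlater : ∃ j, OccursIn w x j
    · obtain ⟨j, hj⟩ := hlater
      obtain ⟨p, hpx, hp⟩ := ih hj
      exact ⟨p, hpx.trans (List.suffix_cons a x), hp⟩
    · simp only [not_exists] at hlater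
      refine ⟨a :: x, List.suffix_refl _, ?_, fun j hj hocc => ?_⟩
      · obtain _ | i := i
        · exact occursIn_zero.1 h
        · exact absurd (occursIn_cons_succ.1 h) (hlater i)
      · obtain ⟨j, rfl⟩ := Nat.exists_eq_add_of_lt hj
        exact hlater j (occursIn_cons_succ.1 (by simpa [Nat.add_comm] using hocc))

lemma IsCompleteReturn.not_hasUniqueOccurrence (hc : IsCompleteReturn w x) :
    ¬ HasUniqueOccurrence w x := fun hu =>
  hu.2 (x.length - w.length) (by have := hc.2.2.1; omega)
    ((occursIn_iff_suffix hc.2.2.1.le).2 hc.2.1)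

lemma hasUniqueOccurrence_or_isCompleteReturn_append_singleton_iff
    (hwp : w.length ≤ p.length) {b : A} :
    HasUniqueOccurrence w (p ++ [b]) ∨ IsCompleteReturn w (p ++ [b]) ↔
      HasUniqueOccurrence w p := by
  have hlen : (p ++ [b]).length = p.length + 1 := by simp
  have hprefix : w <+: p ++ [b] ↔ w <+: p :=
    ⟨fun h => List.prefix_of_prefix_length_le h (List.prefix_append _ _) hwp,
      fun h => h.trans (List.prefix_append _ _)⟩
  constructor
  · rintro (⟨hw, hno⟩ | ⟨hw, -, -, hno⟩)
    · exact ⟨hprefix.1 hw, fun i hi hocc => hno i hi (hocc.append _)⟩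
    · exact ⟨hprefix.1 hw, fun i hi hocc =>
        hno i hi (by have := hocc.1; omega) (hocc.append _)⟩
  · intro hp
    have hend : ∀ i, 0 < i → OccursIn w (p ++ [b]) i → i + w.length = p.length + 1 := by
      intro i hi hocc
      by_contra hne
      exact hp.2 i hi (hocc.of_append (by have := hocc.1; omega))
    by_cases hlater : ∃ i, 0 < i ∧ OccursIn w (p ++ [b]) i
    · obtain ⟨i, hi, hocc⟩ := hlater
      have hi' := hend i hi hocc
      refine Or.inr ⟨hprefix.2 hp.1, ?_, by omega, fun j hj hjlt hocc' => ?_⟩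
      · rw [← occursIn_iff_suffix (by omega), hlen, show p.length + 1 - w.length = i by omega]
        exact hocc
      · have := hend j hj hocc'
        omega
    · simp only [not_exists, not_and] at hlater
      exact Or.inl ⟨hprefix.2 hp.1, hlater⟩

lemma hasUniqueOccurrence_nil_iff : HasUniqueOccurrence [] p ↔ p = [] := by
  refine ⟨fun h => ?_, ?_⟩
  · by_contra hp
    exact h.2 1 Nat.one_pos ⟨by simpa [Nat.one_le_iff_ne_zero] using hp, List.nil_prefix⟩
  · rintro rfl
    exact ⟨List.nil_prefix, fun i hi hocc => by
      have := hocc.1; simp only [List.length_nil] at this; omega⟩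

end UniqueOccurrence

section ReturnWords

variable {u : ℕ → A} {w p v : List A}

lemma occursIn_factorAt {q ℓ i : ℕ} (h : i + w.length ≤ ℓ) :
    OccursIn w (factorAt u q ℓ) i ↔ OccursAt u w (q + i) := by
  rw [OccursIn, factorAt_drop _ _ (by omega), List.prefix_iff_eq_take,
    factorAt_take _ _ (by omega), OccursAt, factorAt_length]
  exact ⟨fun h' => h'.2.symm, fun h' => ⟨h, h'.symm⟩⟩

lemma isReturnWord_iff :
    IsReturnWord u w v ↔ IsFactor u (v ++ w) ∧ IsCompleteReturn w (v ++ w) := by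
  constructor
  · rintro ⟨j, k, hjk, hj, hk, hbetween, rfl⟩
    have hc : factorAt u j (k - j) ++ w = factorAt u j (k - j + w.length) := by
      rw [factorAt_add, Nat.add_sub_cancel' hjk.le, hk]
    have hlen : (factorAt u j (k - j) ++ w).length = k - j + w.length := by simp
    refine ⟨hc ▸ isFactor_factorAt u j _, ?_, List.suffix_append _ _, by omega, ?_⟩
    · rw [hc, ← occursIn_zero, occursIn_factorAt (by omega)]
      exact hj
    · intro i hi hilt hocc
      rw [hc, occursIn_factorAt (by omega)] at hocc
      exact hbetween (j + i) (by omega) (by omega) hocc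
  · rintro ⟨⟨q, hq⟩, hprefix, -, hlen, hno⟩
    have hc : v ++ w = factorAt u q (v.length + w.length) := by
      simpa using hq.eq_factorAt
    simp only [List.length_append] at hlen hno
    refine ⟨q, q + v.length, by omega, ?_, ?_, fun l hl hlt hocc => ?_, ?_⟩
    · rw [hc, ← occursIn_zero, occursIn_factorAt (by omega)] at hprefix
      exact hprefix
    · rw [← occursIn_factorAt (u := u) (ℓ := v.length + w.length) le_rfl, ← hc]
      exact ⟨by simp, by simp⟩
    · refine hno (l - q) (by omega) (by omega) ?_
      rw [hc, occursIn_factorAt (by omega), Nat.add_sub_cancel' hl.le]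
      exact hocc
    · rw [Nat.add_sub_cancel_left, ← factorAt_take u q (Nat.le_add_right _ w.length), ← hc]
      simp

lemma HasUniqueOccurrence.length_le {N : ℕ} (hN : OccursInEveryWindow u w N)
    (hp : IsFactor u p) (h : HasUniqueOccurrence w p) : p.length ≤ N := by
  obtain ⟨q, hq⟩ := hp
  obtain ⟨i, hiN, hocc⟩ := hN (q + 1)
  by_contra! hlong
  refine h.2 (1 + i) (by omega) ?_
  rw [hq.eq_factorAt, occursIn_factorAt (by omega), ← Nat.add_assoc]
  exact hocc

lemma IsCompleteReturn.length_le {c : List A} (hN : OccursInEveryWindow u w N)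
    (hcf : IsFactor u c) (hc : IsCompleteReturn w c) : c.length ≤ N + 1 := by
  obtain rfl | ⟨p, b, rfl⟩ := c.eq_nil_or_concat'
  · simp
  have hwp : w.length ≤ p.length := by
    have := hc.2.2.1
    rw [List.length_append, List.length_singleton] at this
    omega
  have hp := (hasUniqueOccurrence_or_isCompleteReturn_append_singleton_iff hwp).1 (Or.inr hc)
  simpa using hp.length_le hN (hcf.of_prefix (List.prefix_append p [b]))

end ReturnWords

section Counting

variable {u : ℕ → A}

lemma card_eq_sum_ncard_rightExt {S T : Finset (List A)} (hnil : [] ∉ T)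
    (hT : ∀ p b, p ++ [b] ∈ T ↔ p ∈ S ∧ IsFactor u (p ++ [b])) :
    #T = ∑ p ∈ S, (rightExt u p).ncard := by
  have hmaps : ∀ x ∈ T, x.dropLast ∈ S := by
    intro x hx
    obtain rfl | ⟨p, b, rfl⟩ := x.eq_nil_or_concat'
    · exact absurd hx hnil
    · rw [List.dropLast_concat]
      exact ((hT p b).1 hx).1
  rw [card_eq_sum_card_fiberwise hmaps]
  refine Finset.sum_congr rfl fun p hp => ?_
  have hfiber : (↑{x ∈ T | x.dropLast = p} : Set (List A)) = (p ++ [·]) '' rightExt u p := by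
    ext x
    obtain rfl | ⟨q, b, rfl⟩ := x.eq_nil_or_concat'
    · simp [hnil]
    · simp only [coe_filter, Set.mem_ofPred_eq, hT, List.dropLast_concat, Set.mem_image, rightExt]
      grind
  rw [← Set.ncard_coe_finset, hfiber,
    Set.ncard_image_of_injective _ fun a b h => by simpa using h]

variable [Finite A]

lemma finite_setOf_isFactor_length_eq (u : ℕ → A) (n : ℕ) :
    {w : List A | w.length = n ∧ IsFactor u w}.Finite :=
  (List.finite_length_eq A n).subset fun _ hw => hw.1

noncomputable def factorsOfLength (u : ℕ → A) (n : ℕ) : Finset (List A) :=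
  (finite_setOf_isFactor_length_eq u n).toFinset

noncomputable def leftExtFinset (u : ℕ → A) (w : List A) : Finset A :=
  (leftExt u w).toFinite.toFinset

@[simp] lemma mem_factorsOfLength {n : ℕ} {w : List A} :
    w ∈ factorsOfLength u n ↔ w.length = n ∧ IsFactor u w :=
  Set.Finite.mem_toFinset _

@[simp] lemma mem_leftExtFinset {w : List A} {a : A} :
    a ∈ leftExtFinset u w ↔ IsFactor u (a :: w) :=
  Set.Finite.mem_toFinset _

lemma complexity_eq_card (u : ℕ → A) (n : ℕ) : Complexity u n = #(factorsOfLength u n) :=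
  Set.ncard_eq_toFinset_card _ _

lemma factorsOfLength_zero (u : ℕ → A) : factorsOfLength u 0 = {[]} := by
  ext w
  simp only [mem_factorsOfLength, List.length_eq_zero_iff, Finset.mem_singleton,
    and_iff_left_iff_imp]
  rintro rfl
  exact isFactor_nil

lemma complexity_zero (u : ℕ → A) : Complexity u 0 = 1 := by
  rw [complexity_eq_card, factorsOfLength_zero, card_singleton]

lemma card_factorsOfLength_succ (u : ℕ → A) (n : ℕ) :
    #(factorsOfLength u (n + 1)) = ∑ w ∈ factorsOfLength u n, (rightExt u w).ncard := by
  refine card_eq_sum_ncard_rightExt (by simp) fun p b => ?_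
  simp only [mem_factorsOfLength, List.length_append, List.length_singleton,
    Nat.add_right_cancel_iff, and_assoc]
  exact and_congr_right fun _ =>
    ⟨fun h => ⟨h.of_prefix (List.prefix_append _ _), h⟩, And.right⟩

lemma sum_factorsOfLength_succ {M : Type*} [AddCommMonoid M] (u : ℕ → A) (n : ℕ)
    (f : List A → M) :
    ∑ x ∈ factorsOfLength u (n + 1), f x =
      ∑ w ∈ factorsOfLength u n, ∑ a ∈ leftExtFinset u w, f (a :: w) := by
  have hmaps : ∀ x ∈ factorsOfLength u (n + 1), x.tail ∈ factorsOfLength u n := by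
    intro x hx
    rw [mem_factorsOfLength] at hx ⊢
    exact ⟨by simp [hx.1], hx.2.of_suffix (List.tail_suffix x)⟩
  rw [← sum_fiberwise_of_maps_to hmaps]
  refine Finset.sum_congr rfl fun w hw => ?_
  have hfiber : {x ∈ factorsOfLength u (n + 1) | x.tail = w} =
      (leftExtFinset u w).image (· :: w) := by
    ext x
    rcases x with _ | ⟨a, x⟩
    · simp
    · simp only [mem_filter, mem_factorsOfLength, List.tail_cons, mem_image,
        mem_leftExtFinset, List.cons.injEq]
      grind [mem_factorsOfLength]
  rw [hfiber, sum_image fun a _ b _ h => by simpa using h]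

lemma sum_factorsOfLength_sum_filter_suffix {M : Type*} [AddCommMonoid M] {n : ℕ}
    {S : Finset (List A)} (hS : ∀ p ∈ S, IsFactor u p ∧ n ≤ p.length) (f : List A → M) :
    ∑ v ∈ factorsOfLength u n, ∑ p ∈ S with v <:+ p, f p = ∑ p ∈ S, f p := by
  have hmaps : ∀ p ∈ S, p.drop (p.length - n) ∈ factorsOfLength u n := fun p hp =>
    mem_factorsOfLength.2 ⟨by have := (hS p hp).2; rw [List.length_drop]; omega,
      (hS p hp).1.of_suffix (List.drop_suffix _ _)⟩
  rw [← sum_fiberwise_of_maps_to hmaps]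
  refine sum_congr rfl fun v hv => sum_congr (filter_congr fun p _ => ?_) fun _ _ => rfl
  rw [List.suffix_iff_eq_drop, (mem_factorsOfLength.1 hv).1, eq_comm]

end Counting

section BilateralOrder

variable [Finite A] {u : ℕ → A}

noncomputable def rightBranching (u : ℕ → A) (w : List A) : ℤ :=
  (rightExt u w).ncard - 1

lemma ncard_extPairs (u : ℕ → A) (w : List A) :
    (extPairs u w).ncard = ∑ a ∈ leftExtFinset u w, (rightExt u (a :: w)).ncard := by
  have hfin := (extPairs u w).toFinite
  have hmaps : ∀ p ∈ hfin.toFinset, p.1 ∈ leftExtFinset u w := fun p hp => by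
    rw [Set.Finite.mem_toFinset] at hp
    exact mem_leftExtFinset.2 (IsFactor.of_prefix hp ⟨[p.2], by simp⟩)
  rw [Set.ncard_eq_toFinset_card _ hfin, card_eq_sum_card_fiberwise hmaps]
  refine Finset.sum_congr rfl fun a _ => ?_
  have hfiber :
      (↑{p ∈ hfin.toFinset | p.1 = a} : Set (A × A)) = (a, ·) '' rightExt u (a :: w) := by
    ext ⟨a', b⟩
    simp only [coe_filter, Set.Finite.mem_toFinset, extPairs, rightExt, Set.mem_image,
      Set.mem_ofPred_eq, Prod.mk.injEq, List.cons_append]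
    grind
  rw [← Set.ncard_coe_finset, hfiber,
    Set.ncard_image_of_injective _ fun b c h => by simpa using h]

lemma bilateralOrder_eq (u : ℕ → A) (w : List A) :
    bilateralOrder u w =
      ∑ a ∈ leftExtFinset u w, rightBranching u (a :: w) - rightBranching u w := by
  simp only [bilateralOrder, rightBranching, ncard_extPairs, sum_sub_distrib, sum_const,
    Set.ncard_eq_toFinset_card (leftExt u w), nsmul_one, leftExtFinset]
  push_cast
  ring

lemma rightBranching_le_sum_leftExt (hwb : ∀ w, ¬ WeakBispecial u w) {w : List A}
    (hw : IsFactor u w) :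
    rightBranching u w ≤ ∑ a ∈ leftExtFinset u w, rightBranching u (a :: w) := by
  have hB := bilateralOrder_eq u w
  have hnonneg := hwb w
  simp only [WeakBispecial, hw, true_and, not_lt] at hnonneg
  linarith

lemma sum_rightBranching_factorsOfLength (u : ℕ → A) (n : ℕ) :
    ∑ w ∈ factorsOfLength u n, rightBranching u w =
      (Complexity u (n + 1) : ℤ) - Complexity u n := by
  simp only [rightBranching, sum_sub_distrib, sum_const, complexity_eq_card,
    card_factorsOfLength_succ, nsmul_one]
  push_cast
  ring

lemma rightBranching_nil (u : ℕ → A) : rightBranching u [] = Complexity u 1 - 1 := by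
  have := sum_rightBranching_factorsOfLength u 0
  rwa [factorsOfLength_zero, sum_singleton, complexity_zero, Nat.cast_one] at this

lemma sum_bilateralOrder_factorsOfLength (u : ℕ → A) (n : ℕ) :
    ∑ w ∈ factorsOfLength u n, bilateralOrder u w =
      ∑ x ∈ factorsOfLength u (n + 1), rightBranching u x -
        ∑ w ∈ factorsOfLength u n, rightBranching u w := by
  simp only [bilateralOrder_eq, sum_sub_distrib, sum_factorsOfLength_succ]

lemma sum_rightBranching_factorsOfLength_mono (hwb : ∀ w, ¬ WeakBispecial u w) (n : ℕ) :
    ∑ w ∈ factorsOfLength u n, rightBranching u w ≤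
      ∑ x ∈ factorsOfLength u (n + 1), rightBranching u x := by
  rw [sum_factorsOfLength_succ]
  exact sum_le_sum fun w hw => rightBranching_le_sum_leftExt hwb (mem_factorsOfLength.1 hw).2

end BilateralOrder

section SuffixCover

variable {u : ℕ → A} {v : List A} {L : ℕ} {S : Finset (List A)}

lemma exists_cons_suffix_of_suffix_of_ne {p : List A} (h : v <:+ p) (hne : v ≠ p) :
    ∃ a, a :: v <:+ p := by
  obtain ⟨t, rfl⟩ := h
  obtain rfl | ⟨t, a, rfl⟩ := t.eq_nil_or_concat'
  · exact absurd rfl hne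
  · exact ⟨a, t, by simp⟩

structure IsSuffixCover (u : ℕ → A) (v : List A) (L : ℕ) (S : Finset (List A)) : Prop where
  isFactor : ∀ p ∈ S, IsFactor u p
  suffix : ∀ p ∈ S, v <:+ p
  eq_of_suffix : ∀ p ∈ S, ∀ q ∈ S, p <:+ q → p = q
  exists_suffix : ∀ x, IsFactor u x → x.length = L → v <:+ x → ∃ p ∈ S, p <:+ x

namespace IsSuffixCover

lemma eq_singleton (h : IsSuffixCover u v L S) (hv : v ∈ S) : S = {v} :=
  eq_singleton_iff_unique_mem.2
    ⟨hv, fun p hp => (h.eq_of_suffix v hv p hp (h.suffix p hp)).symm⟩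

lemma mem_of_length_eq (h : IsSuffixCover u v L S) (hv : IsFactor u v) (hvL : v.length = L) :
    v ∈ S := by
  obtain ⟨p, hp, hpv⟩ := h.exists_suffix v hv hvL (List.suffix_refl v)
  rwa [← hpv.eq_of_length (le_antisymm hpv.length_le (h.suffix p hp).length_le)]

lemma length_lt (h : IsSuffixCover u v L S) (hvS : v ∉ S) {p : List A} (hp : p ∈ S) :
    v.length < p.length :=
  lt_of_le_of_ne (h.suffix p hp).length_le fun hlen =>
    hvS ((h.suffix p hp).eq_of_length hlen ▸ hp)

lemma filter_suffix (h : IsSuffixCover u v L S) {w : List A} (hvw : v <:+ w)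
    (hlen : ∀ p ∈ S, w.length ≤ p.length) : IsSuffixCover u w L {p ∈ S | w <:+ p} where
  isFactor p hp := h.isFactor p (mem_filter.1 hp).1
  suffix p hp := (mem_filter.1 hp).2
  eq_of_suffix p hp q hq := h.eq_of_suffix p (mem_filter.1 hp).1 q (mem_filter.1 hq).1
  exists_suffix x hx hxL hwx := by
    obtain ⟨p, hp, hpx⟩ := h.exists_suffix x hx hxL (hvw.trans hwx)
    exact ⟨p, mem_filter.2 ⟨hp, List.suffix_of_suffix_length_le hwx hpx (hlen p hp)⟩, hpx⟩

lemma sum_eq_sum_leftExt [Finite A] {M : Type*} [AddCommMonoid M] (h : IsSuffixCover u v L S)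
    (hvS : v ∉ S) (f : List A → M) :
    ∑ p ∈ S, f p = ∑ a ∈ leftExtFinset u v, ∑ p ∈ S with a :: v <:+ p, f p := by
  have hdisj : (leftExtFinset u v : Set A).PairwiseDisjoint fun a => {p ∈ S | a :: v <:+ p} := by
    intro a _ b _ hab
    refine disjoint_filter.2 fun p _ hap hbp => hab ?_
    have := List.suffix_of_suffix_length_le hap hbp (by simp)
    simpa using this.eq_of_length (by simp)
  rw [← sum_biUnion hdisj]
  refine sum_congr (ext fun p => ⟨fun hp => ?_, fun hp => ?_⟩) fun _ _ => rfl
  · obtain ⟨a, hap⟩ :=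
      exists_cons_suffix_of_suffix_of_ne (h.suffix p hp) fun hvp => hvS (hvp ▸ hp)
    exact mem_biUnion.2 ⟨a, mem_leftExtFinset.2 ((h.isFactor p hp).of_suffix hap),
      mem_filter.2 ⟨hp, hap⟩⟩
  · obtain ⟨a, -, hp⟩ := mem_biUnion.1 hp
    exact (mem_filter.1 hp).1

lemma le_sum [Finite A] {M : Type*} [AddCommMonoid M] [PartialOrder M] [IsOrderedAddMonoid M]
    {f : List A → M} (hf : ∀ w, IsFactor u w → f w ≤ ∑ a ∈ leftExtFinset u w, f (a :: w))
    (h : IsSuffixCover u v L S) (hv : IsFactor u v) (hvL : v.length ≤ L) :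
    f v ≤ ∑ p ∈ S, f p := by
  obtain ⟨d, hd⟩ := Nat.exists_eq_add_of_le hvL
  induction d generalizing v S with
  | zero => rw [h.eq_singleton (h.mem_of_length_eq hv hd.symm), sum_singleton]
  | succ d ih =>
    by_cases hvS : v ∈ S
    · rw [h.eq_singleton hvS, sum_singleton]
    calc f v ≤ ∑ a ∈ leftExtFinset u v, f (a :: v) := hf v hv
      _ ≤ ∑ a ∈ leftExtFinset u v, ∑ p ∈ S with a :: v <:+ p, f p :=
        sum_le_sum fun a ha =>
          ih (h.filter_suffix (List.suffix_cons a v) fun p hp => h.length_lt hvS hp)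
            (mem_leftExtFinset.1 ha) (by rw [List.length_cons]; omega)
            (by rw [List.length_cons]; omega)
      _ = ∑ p ∈ S, f p := (h.sum_eq_sum_leftExt hvS f).symm

lemma eq_sum [Finite A] {M : Type*} [AddCommGroup M] [PartialOrder M] [IsOrderedAddMonoid M]
    {f : List A → M} (hf : ∀ w, IsFactor u w → f w = ∑ a ∈ leftExtFinset u w, f (a :: w))
    (h : IsSuffixCover u v L S) (hv : IsFactor u v) (hvL : v.length ≤ L) :
    f v = ∑ p ∈ S, f p := by
  refine le_antisymm (h.le_sum (fun w hw => (hf w hw).le) hv hvL) ?_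
  have := h.le_sum (f := fun w => -f w) (fun w hw => by simp [hf w hw]) hv hvL
  simpa using this

end IsSuffixCover

end SuffixCover

section UniqueOccurrenceFactors

variable [Finite A] {u : ℕ → A} {w : List A} {N : ℕ}

lemma finite_setOf_isFactor_length_le (u : ℕ → A) (L : ℕ) :
    {p : List A | p.length ≤ L ∧ IsFactor u p}.Finite :=
  (List.finite_length_le A L).subset fun _ hp => hp.1

/-- The length bound only makes this set finite: for a window length `L` of `w` it holds for all
factors in which `w` occurs only as a prefix (`HasUniqueOccurrence.length_le`), and `L + 1` below
bounds all complete return words (`IsCompleteReturn.length_le`). -/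
noncomputable def uniqueOccurrenceFactors (u : ℕ → A) (w : List A) (L : ℕ) :
    Finset (List A) :=
  {p ∈ (finite_setOf_isFactor_length_le u L).toFinset | HasUniqueOccurrence w p}

noncomputable def completeReturnFactors (u : ℕ → A) (w : List A) (L : ℕ) : Finset (List A) :=
  {c ∈ (finite_setOf_isFactor_length_le u (L + 1)).toFinset | IsCompleteReturn w c}

@[simp] lemma mem_uniqueOccurrenceFactors {p : List A} :
    p ∈ uniqueOccurrenceFactors u w L ↔
      (p.length ≤ L ∧ IsFactor u p) ∧ HasUniqueOccurrence w p := by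
  rw [uniqueOccurrenceFactors, mem_filter, Set.Finite.mem_toFinset, Set.mem_ofPred_eq]

@[simp] lemma mem_completeReturnFactors {c : List A} :
    c ∈ completeReturnFactors u w L ↔
      (c.length ≤ L + 1 ∧ IsFactor u c) ∧ IsCompleteReturn w c := by
  rw [completeReturnFactors, mem_filter, Set.Finite.mem_toFinset, Set.mem_ofPred_eq]

lemma append_singleton_mem_uniqueOrCompleteReturn_iff (hN : OccursInEveryWindow u w N)
    {p : List A} {b : A} :
    p ++ [b] ∈ (uniqueOccurrenceFactors u w N).erase w ∪ completeReturnFactors u w N ↔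
      p ∈ uniqueOccurrenceFactors u w N ∧ IsFactor u (p ++ [b]) := by
  have hlen : (p ++ [b]).length = p.length + 1 := by simp
  have hstep :=
    hasUniqueOccurrence_or_isCompleteReturn_append_singleton_iff (w := w) (p := p) (b := b)
  simp only [mem_union, mem_erase, mem_uniqueOccurrenceFactors, mem_completeReturnFactors]
  constructor
  · rintro (⟨hne, ⟨-, hx⟩, hu⟩ | ⟨⟨-, hx⟩, hc⟩)
    · have hwp : w.length ≤ p.length := by
        by_contra! hlt
        exact hne (hu.1.eq_of_length (by have := hu.1.length_le; omega)).symm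
      have hp := (hstep hwp).1 (Or.inl hu)
      have hpf := hx.of_prefix (List.prefix_append p [b])
      exact ⟨⟨⟨hp.length_le hN hpf, hpf⟩, hp⟩, hx⟩
    · have hp := (hstep (by have := hc.2.2.1; omega)).1 (Or.inr hc)
      have hpf := hx.of_prefix (List.prefix_append p [b])
      exact ⟨⟨⟨hp.length_le hN hpf, hpf⟩, hp⟩, hx⟩
  · rintro ⟨⟨⟨hpN, -⟩, hp⟩, hx⟩
    rcases (hstep hp.1.length_le).2 hp with hu | hc
    · refine Or.inl ⟨fun h => ?_, ⟨hu.length_le hN hx, hx⟩, hu⟩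
      have := congrArg List.length h
      have := hp.1.length_le
      omega
    · exact Or.inr ⟨⟨by omega, hx⟩, hc⟩

lemma sum_rightBranching_uniqueOccurrenceFactors (hN : OccursInEveryWindow u w N)
    (hw : IsFactor u w) :
    ∑ p ∈ uniqueOccurrenceFactors u w N, rightBranching u p =
      #(completeReturnFactors u w N) - 1 := by
  set U := uniqueOccurrenceFactors u w N
  set C := completeReturnFactors u w N
  have hwU : w ∈ U := mem_uniqueOccurrenceFactors.2
    ⟨⟨(hasUniqueOccurrence_self w).length_le hN hw, hw⟩, hasUniqueOccurrence_self w⟩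
  have hdisj : Disjoint (U.erase w) C := disjoint_left.2 fun x hxU hxC =>
    (mem_completeReturnFactors.1 hxC).2.not_hasUniqueOccurrence
      (mem_uniqueOccurrenceFactors.1 (mem_of_mem_erase hxU)).2
  have hnil : [] ∉ U.erase w ∪ C := by
    rw [mem_union, mem_erase, mem_uniqueOccurrenceFactors, mem_completeReturnFactors]
    rintro (⟨hne, -, hu⟩ | ⟨-, hc⟩)
    · exact hne (List.prefix_nil.1 hu.1).symm
    · exact Nat.not_lt_zero _ hc.2.2.1
  -- The one-letter right extensions of the words of `U` are the words of `U` other than `w`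
  -- and the complete return words.
  have hext : #(U.erase w ∪ C) = ∑ p ∈ U, (rightExt u p).ncard :=
    card_eq_sum_ncard_rightExt hnil fun _ _ => append_singleton_mem_uniqueOrCompleteReturn_iff hN
  rw [card_union_of_disjoint hdisj, card_erase_of_mem hwU] at hext
  have hUpos : 1 ≤ #U := card_pos.2 ⟨w, hwU⟩
  simp only [rightBranching, sum_sub_distrib, sum_const, nsmul_one, ← Nat.cast_sum, ← hext]
  push_cast [hUpos]
  ring

lemma image_append_returnWords (hN : OccursInEveryWindow u w N) :
    (· ++ w) '' returnWords u w = completeReturnFactors u w N := by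
  ext c
  simp only [Set.mem_image, returnWords, Set.mem_ofPred_eq, isReturnWord_iff, mem_coe,
    mem_completeReturnFactors]
  constructor
  · rintro ⟨v, ⟨hf, hc⟩, rfl⟩
    exact ⟨⟨hc.length_le hN hf, hf⟩, hc⟩
  · rintro ⟨⟨-, hf⟩, hc⟩
    obtain ⟨v, rfl⟩ := hc.2.1
    exact ⟨v, ⟨hf, hc⟩, rfl⟩

lemma finite_returnWords (hN : OccursInEveryWindow u w N) : (returnWords u w).Finite :=
  Set.Finite.of_finite_image (image_append_returnWords hN ▸ finite_toSet _)
    (List.append_left_injective w).injOn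

lemma ncard_returnWords (hN : OccursInEveryWindow u w N) (hw : IsFactor u w) :
    ((returnWords u w).ncard : ℤ) =
      1 + ∑ p ∈ uniqueOccurrenceFactors u w N, rightBranching u p := by
  rw [sum_rightBranching_uniqueOccurrenceFactors hN hw, ← Set.ncard_image_of_injective _
    (List.append_left_injective w), image_append_returnWords hN, Set.ncard_coe_finset]
  ring

lemma isSuffixCover_uniqueOccurrenceFactors (hN : OccursInEveryWindow u w N) :
    IsSuffixCover u [] N (uniqueOccurrenceFactors u w N) where
  isFactor p hp := (mem_uniqueOccurrenceFactors.1 hp).1.2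
  suffix _ _ := List.nil_suffix
  eq_of_suffix p hp q hq := (mem_uniqueOccurrenceFactors.1 hp).2.eq_of_suffix
    (mem_uniqueOccurrenceFactors.1 hq).2
  exists_suffix x hx hxN _ := by
    obtain ⟨q, hq⟩ := hx
    obtain ⟨i, hiN, hocc⟩ := hN q
    have hxq : x = factorAt u q N := hxN ▸ hq.eq_factorAt
    rw [← occursIn_factorAt (by omega), ← hxq] at hocc
    obtain ⟨p, hpx, hp⟩ := exists_suffix_hasUniqueOccurrence hocc
    exact ⟨p, mem_uniqueOccurrenceFactors.2
      ⟨⟨hxN ▸ hpx.length_le, IsFactor.of_suffix ⟨q, hq⟩ hpx⟩, hp⟩, hpx⟩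

lemma uniqueOccurrenceFactors_nil (u : ℕ → A) (L : ℕ) :
    uniqueOccurrenceFactors u [] L = {[]} := by
  ext p
  simp only [mem_uniqueOccurrenceFactors, hasUniqueOccurrence_nil_iff, mem_singleton,
    and_iff_right_iff_imp]
  rintro rfl
  exact ⟨Nat.zero_le L, isFactor_nil⟩

lemma ncard_returnWords_nil (u : ℕ → A) :
    ((returnWords u []).ncard : ℤ) = Complexity u 1 := by
  rw [ncard_returnWords occursInEveryWindow_nil isFactor_nil, uniqueOccurrenceFactors_nil,
    sum_singleton, rightBranching_nil]
  ring

end UniqueOccurrenceFactors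

section Main

variable [Finite A] {u : ℕ → A}

lemma sum_rightBranching_le_ncard_returnWords (hwb : ∀ w, ¬ WeakBispecial u w) {w : List A}
    {N : ℕ} (hN : OccursInEveryWindow u w N) (hw : IsFactor u w) :
    ∑ v ∈ factorsOfLength u w.length, rightBranching u v ≤ (returnWords u w).ncard - 1 := by
  have hcover := isSuffixCover_uniqueOccurrenceFactors hN
  have hlen : ∀ p ∈ uniqueOccurrenceFactors u w N, w.length ≤ p.length := fun p hp =>
    (mem_uniqueOccurrenceFactors.1 hp).2.1.length_le
  have hwN : w.length ≤ N := (hasUniqueOccurrence_self w).length_le hN hw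
  rw [ncard_returnWords hN hw, add_sub_cancel_left,
    ← sum_factorsOfLength_sum_filter_suffix fun p hp => ⟨hcover.isFactor p hp, hlen p hp⟩]
  refine sum_le_sum fun v hv => ?_
  obtain ⟨hvlen, hv⟩ := mem_factorsOfLength.1 hv
  exact (hcover.filter_suffix List.nil_suffix (hvlen ▸ hlen)).le_sum
    (fun _ => rightBranching_le_sum_leftExt hwb) hv (hvlen ▸ hwN)

lemma complexity_eq_of_propertyR (hur : UniformlyRecurrent u) (hwb : ∀ w, ¬ WeakBispecial u w)
    {m : ℕ} (hR : PropertyR u m) (n : ℕ) : (Complexity u n : ℤ) = (m - 1) * n + 1 := by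
  have hstep : ∀ n, (Complexity u (n + 1) : ℤ) - Complexity u n = m - 1 := by
    intro n
    rw [← sum_rightBranching_factorsOfLength]
    refine le_antisymm ?_ ?_
    · have hw := isFactor_factorAt u 0 n
      obtain ⟨N, hN⟩ := hur.exists_occursInEveryWindow hw
      have := sum_rightBranching_le_ncard_returnWords hwb hN hw
      rwa [factorAt_length, (hR _ hw).2] at this
    · have h0 : ∑ v ∈ factorsOfLength u 0, rightBranching u v = m - 1 := by
        rw [sum_rightBranching_factorsOfLength, ← ncard_returnWords_nil, (hR [] isFactor_nil).2,
          complexity_zero, Nat.cast_one]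
      exact h0 ▸ monotone_nat_of_le_succ (sum_rightBranching_factorsOfLength_mono hwb)
        (Nat.zero_le n)
  induction n with
  | zero => simp [complexity_zero]
  | succ n ih =>
    push_cast
    linarith [hstep n]

lemma bilateralOrder_eq_zero_of_complexity_eq (hwb : ∀ w, ¬ WeakBispecial u w) {a b : ℤ}
    (hC : ∀ n, (Complexity u n : ℤ) = a * n + b) {v : List A} (hv : IsFactor u v) :
    bilateralOrder u v = 0 := by
  have hsum : ∑ w ∈ factorsOfLength u v.length, bilateralOrder u w = 0 := by
    rw [sum_bilateralOrder_factorsOfLength, sum_rightBranching_factorsOfLength,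
      sum_rightBranching_factorsOfLength, hC, hC, hC]
    push_cast
    ring
  have hnonneg : ∀ w ∈ factorsOfLength u v.length, 0 ≤ bilateralOrder u w := fun w hw =>
    not_lt.1 fun hneg => hwb w ⟨(mem_factorsOfLength.1 hw).2, hneg⟩
  exact (sum_eq_zero_iff_of_nonneg hnonneg).1 hsum v (mem_factorsOfLength.2 ⟨rfl, hv⟩)

lemma propertyR_of_complexity_eq (hur : UniformlyRecurrent u) (hwb : ∀ w, ¬ WeakBispecial u w)
    {m : ℕ} (hC : ∀ n, (Complexity u n : ℤ) = (m - 1) * n + 1) : PropertyR u m := by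
  have hflow : ∀ v, IsFactor u v →
      rightBranching u v = ∑ a ∈ leftExtFinset u v, rightBranching u (a :: v) := fun v hv => by
    have := bilateralOrder_eq u v
    rw [bilateralOrder_eq_zero_of_complexity_eq hwb hC hv] at this
    linarith
  intro w hw
  obtain ⟨N, hN⟩ := hur.exists_occursInEveryWindow hw
  refine ⟨finite_returnWords hN, ?_⟩
  have h := ncard_returnWords hN hw
  rw [← (isSuffixCover_uniqueOccurrenceFactors hN).eq_sum hflow isFactor_nil (Nat.zero_le N),
    rightBranching_nil, hC] at h
  push_cast at h
  omega

end Main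

/-- A uniformly recurrent word with no weak bispecial factor satisfies
`R_m` if and only if `C(n) = (m-1) n + 1` for all `n ≥ 0`. -/
theorem propertyR_iff_complexity [Fintype A] (u : ℕ → A) (m : ℕ)
    (hur : UniformlyRecurrent u) (hwb : ∀ w, ¬ WeakBispecial u w) :
    PropertyR u m ↔ ∀ n : ℕ, (Complexity u n : ℤ) = ((m : ℤ) - 1) * n + 1 :=
  ⟨complexity_eq_of_propertyR hur hwb, propertyR_of_complexity_eq hur hwb⟩
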